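/- arXiv:1910.12563 — 6 statements merged into one kernel-verified Lean document; each statement's English description precedes it below -/
import Mathlib

section
/- Let c, d, m be integers with 1 ≤ c < d, d ≥ 5, m ≥ 1, and let n = c·d^m. Then the subset Ω = {±1, ±d, ±d², ..., ±d^{m-1}} of ℤ_n has the unique summation property. -/
lemma divu (d ε : ℤ) (a : ℕ) : d ∣ ε * d ^ a - (if a = 0 then ε else 0) := by
  rcases a with _ | a
  · simp
  · simp [pow_succ]
    exact ⟨ε * d ^ a, by ring⟩

lemma key (d : ℤ) (hd : 5 ≤ d) :
    ∀ N a b e f : ℕ, a + b + e + f ≤ N →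
    ∀ ε₁ ε₂ ε₃ ε₄ : ℤ,
    (ε₁ = 1 ∨ ε₁ = -1) → (ε₂ = 1 ∨ ε₂ = -1) → (ε₃ = 1 ∨ ε₃ = -1) → (ε₄ = 1 ∨ ε₄ = -1) →
    ε₁ * d ^ a + ε₂ * d ^ b = ε₃ * d ^ e + ε₄ * d ^ f →
    ε₁ * d ^ a + ε₂ * d ^ b ≠ 0 →
    (ε₁ * d ^ a = ε₃ * d ^ e ∧ ε₂ * d ^ b = ε₄ * d ^ f) ∨
    (ε₁ * d ^ a = ε₄ * d ^ f ∧ ε₂ * d ^ b = ε₃ * d ^ e) := by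
  intro N
  induction N with
  | zero =>
    intro a b e f hN ε₁ ε₂ ε₃ ε₄ h1 h2 h3 h4 heq hne
    obtain ⟨rfl, rfl, rfl, rfl⟩ : a = 0 ∧ b = 0 ∧ e = 0 ∧ f = 0 := by omega
    simp only [pow_zero, mul_one] at heq hne ⊢
    omega
  | succ N ih =>
    intro a b e f hN ε₁ ε₂ ε₃ ε₄ h1 h2 h3 h4 heq hne
    have hu : (if a = 0 then ε₁ else 0) + (if b = 0 then ε₂ else 0)
        = (if e = 0 then ε₃ else 0) + (if f = 0 then ε₄ else 0) := by
      have d1 := (divu d ε₁ a).add (divu d ε₂ b)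
      have d2 := (divu d ε₃ e).add (divu d ε₄ f)
      have hdvd : d ∣ ((if a = 0 then ε₁ else 0) + (if b = 0 then ε₂ else 0))
          - ((if e = 0 then ε₃ else 0) + (if f = 0 then ε₄ else 0)) := by
        have hrw : ((if a = 0 then ε₁ else 0) + (if b = 0 then ε₂ else 0))
            - ((if e = 0 then ε₃ else 0) + (if f = 0 then ε₄ else 0)) =
            ((ε₃ * d ^ e - if e = 0 then ε₃ else 0) +
            (ε₄ * d ^ f - if f = 0 then ε₄ else 0)) -
            ((ε₁ * d ^ a - if a = 0 then ε₁ else 0) +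
            (ε₂ * d ^ b - if b = 0 then ε₂ else 0)) := by
          linear_combination heq
        rw [hrw]
        exact d2.sub d1
      have h5 := Int.eq_zero_of_abs_lt_dvd hdvd (by
        have b1 : (-2 : ℤ) ≤ (if a = 0 then ε₁ else 0) + (if b = 0 then ε₂ else 0) ∧
            (if a = 0 then ε₁ else 0) + (if b = 0 then ε₂ else 0) ≤ 2 := by
          split_ifs <;> omega
        have b2 : (-2 : ℤ) ≤ (if e = 0 then ε₃ else 0) + (if f = 0 then ε₄ else 0) ∧
            (if e = 0 then ε₃ else 0) + (if f = 0 then ε₄ else 0) ≤ 2 := by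
          split_ifs <;> omega
        rw [abs_lt]; omega)
      omega
    by_cases ha : a = 0 <;> by_cases hb : b = 0 <;> by_cases he : e = 0 <;> by_cases hf : f = 0
    -- 1: a=0 b=0 e=0 f=0
    · subst ha hb he hf
      simp only [pow_zero, mul_one] at heq hne ⊢
      omega
    -- 2: a=0 b=0 e=0 f>0
    · subst ha hb he
      simp [hf] at hu
      omega
    -- 3: a=0 b=0 e>0 f=0
    · subst ha hb hf
      simp [he] at hu
      omega
    -- 4: a=0 b=0 e>0 f>0
    · subst ha hb
      simp [he, hf] at hu
      simp only [pow_zero, mul_one] at hne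
      omega
    -- 5: a=0 b>0 e=0 f=0
    · subst ha he hf
      simp [hb] at hu
      omega
    -- 6: a=0 b>0 e=0 f>0
    · subst ha he
      simp [hb, hf] at hu
      left
      refine ⟨by rw [hu], ?_⟩
      simp only [pow_zero, mul_one] at heq; rw [hu] at heq; linarith
    -- 7: a=0 b>0 e>0 f=0
    · subst ha hf
      simp [hb, he] at hu
      right
      refine ⟨by rw [hu], ?_⟩
      simp only [pow_zero, mul_one] at heq; rw [hu] at heq; linarith
    -- 8: a=0 b>0 e>0 f>0
    · subst ha
      simp [hb, he, hf] at hu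
      omega
    -- 9: a>0 b=0 e=0 f=0
    · subst hb he hf
      simp [ha] at hu
      omega
    -- 10: a>0 b=0 e=0 f>0
    · subst hb he
      simp [ha, hf] at hu
      right
      refine ⟨?_, by rw [hu]⟩
      simp only [pow_zero, mul_one] at heq; rw [hu] at heq; linarith
    -- 11: a>0 b=0 e>0 f=0
    · subst hb hf
      simp [ha, he] at hu
      left
      refine ⟨?_, by rw [hu]⟩
      simp only [pow_zero, mul_one] at heq; rw [hu] at heq; linarith
    -- 12: a>0 b=0 e>0 f>0
    · subst hb
      simp [ha, he, hf] at hu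
      omega
    -- 13: a>0 b>0 e=0 f=0
    · subst he hf
      simp [ha, hb] at hu
      exfalso
      apply hne
      rw [heq]
      simp only [pow_zero, mul_one]
      omega
    -- 14: a>0 b>0 e=0 f>0
    · subst he
      simp [ha, hb, hf] at hu
      omega
    -- 15: a>0 b>0 e>0 f=0
    · subst hf
      simp [ha, hb, he] at hu
      omega
    -- 16: all positive, recurse
    · obtain ⟨a', rfl⟩ : ∃ a', a = a' + 1 := ⟨a - 1, by omega⟩
      obtain ⟨b', rfl⟩ : ∃ b', b = b' + 1 := ⟨b - 1, by omega⟩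
      obtain ⟨e', rfl⟩ : ∃ e', e = e' + 1 := ⟨e - 1, by omega⟩
      obtain ⟨f', rfl⟩ : ∃ f', f = f' + 1 := ⟨f - 1, by omega⟩
      have hd0 : d ≠ 0 := by omega
      have h6 : d * (ε₁ * d ^ a' + ε₂ * d ^ b') = d * (ε₃ * d ^ e' + ε₄ * d ^ f') := by
        linear_combination heq
      have heq' : ε₁ * d ^ a' + ε₂ * d ^ b' = ε₃ * d ^ e' + ε₄ * d ^ f' :=
        mul_left_cancel₀ hd0 h6
      have hne' : ε₁ * d ^ a' + ε₂ * d ^ b' ≠ 0 := by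
        intro h0
        apply hne
        have h7 : ε₁ * d ^ (a' + 1) + ε₂ * d ^ (b' + 1) = d * (ε₁ * d ^ a' + ε₂ * d ^ b') := by
          ring
        rw [h7, h0, mul_zero]
      rcases ih a' b' e' f' (by omega) ε₁ ε₂ ε₃ ε₄ h1 h2 h3 h4 heq' hne' with ⟨hl, hr⟩ | ⟨hl, hr⟩
      · left; exact ⟨by linear_combination d * hl, by linear_combination d * hr⟩
      · right; exact ⟨by linear_combination d * hl, by linear_combination d * hr⟩



/-- The unique summation property for a subset of an additive abelian group. -/
def hasUS {G : Type*} [AddCommGroup G] (Ω : Set G) : Prop :=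
  ∀ g : G, g ≠ 0 → ∀ s₁ ∈ Ω, ∀ s₂ ∈ Ω, ∀ s₃ ∈ Ω, ∀ s₄ ∈ Ω,
    s₁ + s₂ = g → s₃ + s₄ = g → ({s₁, s₂} : Multiset G) = {s₃, s₄}

theorem stmt3 (c d m : ℕ) (hc : 1 ≤ c) (hcd : c < d) (hd : 5 ≤ d) (hm : 1 ≤ m) :
    hasUS {x : ZMod (c * d ^ m) | ∃ j < m, x = (d : ZMod (c * d ^ m)) ^ j ∨
      x = -(d : ZMod (c * d ^ m)) ^ j} := by
  intro g hg s₁ hs₁ s₂ hs₂ s₃ hs₃ s₄ hs₄ h12 h34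
  obtain ⟨m', rfl⟩ : ∃ m', m = m' + 1 := ⟨m - 1, by omega⟩
  have rep : ∀ s : ZMod (c * d ^ (m' + 1)),
      s ∈ {x : ZMod (c * d ^ (m' + 1)) | ∃ j < m' + 1, x = (d : ZMod (c * d ^ (m' + 1))) ^ j ∨
        x = -(d : ZMod (c * d ^ (m' + 1))) ^ j} →
      ∃ ε : ℤ, ∃ j : ℕ, (ε = 1 ∨ ε = -1) ∧ j < m' + 1 ∧
        s = ((ε * (d : ℤ) ^ j : ℤ) : ZMod (c * d ^ (m' + 1))) := by
    rintro s ⟨j, hj, h | h⟩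
    · exact ⟨1, j, Or.inl rfl, hj, by rw [h]; push_cast; ring⟩
    · exact ⟨-1, j, Or.inr rfl, hj, by rw [h]; push_cast; ring⟩
  obtain ⟨ε₁, j₁, h1, hj₁, e₁⟩ := rep s₁ hs₁
  obtain ⟨ε₂, j₂, h2, hj₂, e₂⟩ := rep s₂ hs₂
  obtain ⟨ε₃, j₃, h3, hj₃, e₃⟩ := rep s₃ hs₃
  obtain ⟨ε₄, j₄, h4, hj₄, e₄⟩ := rep s₄ hs₄
  have hd' : (5 : ℤ) ≤ (d : ℤ) := by exact_mod_cast hd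
  have hdpos : (0 : ℤ) < (d : ℤ) := by linarith
  have hbound : ∀ (ε : ℤ) (j : ℕ), (ε = 1 ∨ ε = -1) → j < m' + 1 →
      |ε * (d : ℤ) ^ j| ≤ (d : ℤ) ^ m' := by
    intro ε j hε hj
    have h1 : |ε * (d : ℤ) ^ j| = (d : ℤ) ^ j := by
      rw [abs_mul, abs_pow, abs_of_pos hdpos]
      rcases hε with rfl | rfl <;> simp
    rw [h1]
    exact pow_le_pow_right₀ (by linarith) (by omega)
  have hpm : (0 : ℤ) < (d : ℤ) ^ m' := pow_pos hdpos _
  -- the two integer sums are congruent mod n, hence equal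
  have hcast : ((ε₁ * (d : ℤ) ^ j₁ + ε₂ * (d : ℤ) ^ j₂ : ℤ) : ZMod (c * d ^ (m' + 1)))
      = ((ε₃ * (d : ℤ) ^ j₃ + ε₄ * (d : ℤ) ^ j₄ : ℤ) : ZMod (c * d ^ (m' + 1))) := by
    rw [Int.cast_add, Int.cast_add, ← e₁, ← e₂, ← e₃, ← e₄, h12, h34]
  rw [ZMod.intCast_eq_intCast_iff_dvd_sub] at hcast
  have hnz : (ε₁ * (d : ℤ) ^ j₁ + ε₂ * (d : ℤ) ^ j₂ : ℤ) ≠ 0 := by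
    intro h0
    apply hg
    rw [← h12, e₁, e₂]
    have : ((ε₁ * (d : ℤ) ^ j₁ + ε₂ * (d : ℤ) ^ j₂ : ℤ) : ZMod (c * d ^ (m' + 1))) = 0 := by
      rw [h0]; simp
    rw [Int.cast_add] at this
    exact this
  have hST : (ε₁ * (d : ℤ) ^ j₁ + ε₂ * (d : ℤ) ^ j₂ : ℤ)
      = ε₃ * (d : ℤ) ^ j₃ + ε₄ * (d : ℤ) ^ j₄ := by
    have hb1 := hbound ε₁ j₁ h1 hj₁
    have hb2 := hbound ε₂ j₂ h2 hj₂
    have hb3 := hbound ε₃ j₃ h3 hj₃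
    have hb4 := hbound ε₄ j₄ h4 hj₄
    have habs : |(ε₃ * (d : ℤ) ^ j₃ + ε₄ * (d : ℤ) ^ j₄)
        - (ε₁ * (d : ℤ) ^ j₁ + ε₂ * (d : ℤ) ^ j₂)| ≤ 4 * (d : ℤ) ^ m' := by
      have t1 := abs_sub_abs_le_abs_sub (ε₃ * (d:ℤ)^j₃) (0:ℤ)
      calc |(ε₃ * (d : ℤ) ^ j₃ + ε₄ * (d : ℤ) ^ j₄)
          - (ε₁ * (d : ℤ) ^ j₁ + ε₂ * (d : ℤ) ^ j₂)|
          ≤ |ε₃ * (d : ℤ) ^ j₃ + ε₄ * (d : ℤ) ^ j₄|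
            + |ε₁ * (d : ℤ) ^ j₁ + ε₂ * (d : ℤ) ^ j₂| := abs_sub _ _
        _ ≤ (|ε₃ * (d : ℤ) ^ j₃| + |ε₄ * (d : ℤ) ^ j₄|)
            + (|ε₁ * (d : ℤ) ^ j₁| + |ε₂ * (d : ℤ) ^ j₂|) := by
            gcongr <;> exact abs_add_le _ _
        _ ≤ 4 * (d : ℤ) ^ m' := by linarith
    have hlt : |(ε₃ * (d : ℤ) ^ j₃ + ε₄ * (d : ℤ) ^ j₄)
        - (ε₁ * (d : ℤ) ^ j₁ + ε₂ * (d : ℤ) ^ j₂)| < ((c * d ^ (m' + 1) : ℕ) : ℤ) := by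
      have hn : ((c * d ^ (m' + 1) : ℕ) : ℤ) = (c : ℤ) * (d : ℤ) ^ (m' + 1) := by push_cast; ring
      rw [hn]
      have hc' : (1 : ℤ) ≤ (c : ℤ) := by exact_mod_cast hc
      have : (c : ℤ) * (d : ℤ) ^ (m' + 1) ≥ 5 * (d : ℤ) ^ m' := by
        have : (d : ℤ) ^ (m' + 1) = (d : ℤ) * (d : ℤ) ^ m' := by ring
        nlinarith [pow_pos hdpos (m' + 1)]
      linarith
    have := Int.eq_zero_of_abs_lt_dvd hcast hlt
    linarith
  rcases key (d : ℤ) hd' (j₁ + j₂ + j₃ + j₄) j₁ j₂ j₃ j₄ le_rfl ε₁ ε₂ ε₃ ε₄ h1 h2 h3 h4 hST hnz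
    with ⟨hl, hr⟩ | ⟨hl, hr⟩
  · rw [show s₁ = s₃ by rw [e₁, e₃, hl], show s₂ = s₄ by rw [e₂, e₄, hr]]
  · rw [show s₁ = s₄ by rw [e₁, e₄, hl], show s₂ = s₃ by rw [e₂, e₃, hr]]
    exact Multiset.pair_comm _ _
end

section
/- Let k > 3. The subset S = {1, 2k-1, k} of ℤ_{2k} has the unique summation property. -/
lemma mod2' {n a : ℕ} (h : a < 2*n) : a % n = a ∨ (n ≤ a ∧ a % n = a - n) := by
  rcases lt_or_ge a n with h'|h'
  · left; exact Nat.mod_eq_of_lt h'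
  · right; exact ⟨h', by rw [Nat.mod_eq_sub_mod h', Nat.mod_eq_of_lt (by omega)]⟩

lemma master {k a b : ℕ} (hk : 3 < k) (ha : a < 4*k) (hb : b < 4*k)
    (h : ((a:ℕ) : ZMod (2*k)) = ((b:ℕ) : ZMod (2*k))) :
    a = b ∨ a = b + 2*k ∨ b = a + 2*k := by
  haveI : NeZero (2*k) := ⟨by omega⟩
  have H := congrArg ZMod.val h
  simp only [ZMod.val_natCast] at H
  rcases mod2' (n := 2*k) (a := a) (by omega) with h1|⟨h1',h1⟩ <;>
    rcases mod2' (n := 2*k) (a := b) (by omega) with h2|⟨h2',h2⟩ <;> rw [h1, h2] at H <;> omega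

theorem stmt4 (k : ℕ) (hk : 3 < k) :
    hasUS ({1, ((2 * k - 1 : ℕ) : ZMod (2 * k)), ((k : ℕ) : ZMod (2 * k))} :
      Set (ZMod (2 * k))) := by
  have h1 : (1 : ZMod (2*k)) = ((1:ℕ) : ZMod (2*k)) := by norm_cast
  intro g hg s1 hs1 s2 hs2 s3 hs3 s4 hs4 h12 h34
  rw [h1] at hs1 hs2 hs3 hs4
  simp only [Set.mem_insert_iff, Set.mem_singleton_iff] at hs1 hs2 hs3 hs4
  have hz1 : ((1:ℕ) : ZMod (2*k)) + ((2*k-1:ℕ) : ZMod (2*k)) = 0 := by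
    rw [← Nat.cast_add, show 1 + (2*k-1) = 2*k by omega, ZMod.natCast_self]
  have hz2 : ((2*k-1:ℕ) : ZMod (2*k)) + ((1:ℕ) : ZMod (2*k)) = 0 := by
    rw [add_comm]; exact hz1
  have hz3 : ((k:ℕ) : ZMod (2*k)) + ((k:ℕ) : ZMod (2*k)) = 0 := by
    rw [← Nat.cast_add, show k + k = 2*k by omega, ZMod.natCast_self]
  rcases hs1 with rfl|rfl|rfl <;> rcases hs2 with rfl|rfl|rfl <;>
    rcases hs3 with rfl|rfl|rfl <;> rcases hs4 with rfl|rfl|rfl <;>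
  first
    | rfl
    | exact Multiset.pair_comm _ _
    | exact absurd (by rw [← h12]; first | exact hz1 | exact hz2 | exact hz3) hg
    | exact absurd (by rw [← h34]; first | exact hz1 | exact hz2 | exact hz3) hg
    | (rw [← Nat.cast_add] at h12 h34;
       exact absurd (master hk (by omega) (by omega) (h34.trans h12.symm)) (by omega))
end

section
/- Let k > 3. The subset T = {1, 2k, k, k+1} of ℤ_{2k+1} has the unique summation property. -/
lemma modeq_cases {n a b : ℕ} (hn : 0 < n) (h : a ≡ b [MOD n]) (ha : a < 2 * n)
    (hb : b < 2 * n) : a = b ∨ a = b + n ∨ b = a + n := by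
  obtain ⟨c, hc⟩ := (Nat.modEq_iff_dvd).mp h
  have hn' : (0 : ℤ) < (n : ℤ) := by exact_mod_cast hn
  have ha' : (a : ℤ) < 2 * n := by exact_mod_cast ha
  have hb' : (b : ℤ) < 2 * n := by exact_mod_cast hb
  have ha0 : (0 : ℤ) ≤ (a : ℤ) := Int.natCast_nonneg a
  have hb0 : (0 : ℤ) ≤ (b : ℤ) := Int.natCast_nonneg b
  have h1 : c < 2 := by nlinarith
  have h2 : -2 < c := by nlinarith
  interval_cases c <;> omega

theorem stmt6 (k : ℕ) (hk : 3 < k) :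
    hasUS ({1, ((2 * k : ℕ) : ZMod (2 * k + 1)), ((k : ℕ) : ZMod (2 * k + 1)),
      ((k + 1 : ℕ) : ZMod (2 * k + 1))} : Set (ZMod (2 * k + 1))) := by
  intro g hg s₁ h₁ s₂ h₂ s₃ h₃ s₄ h₄ e₁ e₂
  have key : ∀ s : ZMod (2 * k + 1),
      s ∈ ({1, ((2 * k : ℕ) : ZMod (2 * k + 1)), ((k : ℕ) : ZMod (2 * k + 1)),
        ((k + 1 : ℕ) : ZMod (2 * k + 1))} : Set (ZMod (2 * k + 1))) →
      ∃ a : ℕ, (a = 1 ∨ a = 2 * k ∨ a = k ∨ a = k + 1) ∧ s = (a : ZMod (2 * k + 1)) := by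
    intro s hs
    simp only [Set.mem_insert_iff, Set.mem_singleton_iff] at hs
    rcases hs with rfl | rfl | rfl | rfl
    · exact ⟨1, Or.inl rfl, by norm_num⟩
    · exact ⟨2 * k, Or.inr (Or.inl rfl), rfl⟩
    · exact ⟨k, Or.inr (Or.inr (Or.inl rfl)), rfl⟩
    · exact ⟨k + 1, Or.inr (Or.inr (Or.inr rfl)), rfl⟩
  obtain ⟨a₁, ha₁, rfl⟩ := key s₁ h₁
  obtain ⟨a₂, ha₂, rfl⟩ := key s₂ h₂
  obtain ⟨a₃, ha₃, rfl⟩ := key s₃ h₃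
  obtain ⟨a₄, ha₄, rfl⟩ := key s₄ h₄
  have e : ((a₁ + a₂ : ℕ) : ZMod (2 * k + 1)) = ((a₃ + a₄ : ℕ) : ZMod (2 * k + 1)) := by
    push_cast
    rw [e₁, e₂]
  have hg0 : ((a₁ + a₂ : ℕ) : ZMod (2 * k + 1)) ≠ 0 := by
    push_cast
    rw [e₁]; exact hg
  rw [ZMod.natCast_eq_natCast_iff] at e
  rw [Ne, ZMod.natCast_eq_zero_iff] at hg0
  have hb₁ : 1 ≤ a₁ ∧ a₁ ≤ 2 * k := by rcases ha₁ with rfl | rfl | rfl | rfl <;> omega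
  have hb₂ : 1 ≤ a₂ ∧ a₂ ≤ 2 * k := by rcases ha₂ with rfl | rfl | rfl | rfl <;> omega
  have hb₃ : 1 ≤ a₃ ∧ a₃ ≤ 2 * k := by rcases ha₃ with rfl | rfl | rfl | rfl <;> omega
  have hb₄ : 1 ≤ a₄ ∧ a₄ ≤ 2 * k := by rcases ha₄ with rfl | rfl | rfl | rfl <;> omega
  have htri := modeq_cases (by omega) e (by omega) (by omega)
  have hne1 : a₁ + a₂ ≠ 2 * k + 1 := fun h => hg0 ⟨1, by omega⟩
  have hne2 : a₁ + a₂ ≠ 2 * (2 * k + 1) := fun h => hg0 ⟨2, by omega⟩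
  clear e hg0 e₁ e₂ hg h₁ h₂ h₃ h₄ key
  rcases ha₁ with rfl | rfl | rfl | rfl <;>
    rcases ha₂ with rfl | rfl | rfl | rfl <;>
      rcases ha₃ with rfl | rfl | rfl | rfl <;>
        rcases ha₄ with rfl | rfl | rfl | rfl <;>
          first
            | rfl
            | exact Multiset.cons_swap _ _ _
            | (exfalso; omega)
end

section
/- Let k ≥ 2 with k ≠ 4 and n ≥ 1. In the group ℤ_k^n, the set Ω = {±e_i : 1 ≤ i ≤ n} of signed standard basis vectors has the unique summation property. -/
section aux

variable {k n : ℕ}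

lemma aux_single_apply (i t : Fin n) (a : ZMod k) :
    (Pi.single i a : Fin n → ZMod k) t = if t = i then a else 0 :=
  Pi.single_apply i a t

lemma aux_sign_ne_zero (hk : 2 ≤ k) {a : ZMod k} (ha : a = 1 ∨ a = -1) : a ≠ 0 := by
  have : NeZero k := ⟨by omega⟩
  have h1 : (1 : ZMod k) ≠ 0 := by
    have : Fact (1 < k) := ⟨by omega⟩
    exact one_ne_zero
  rcases ha with rfl | rfl
  · exact h1
  · intro h; exact h1 (by linear_combination -h)

lemma aux_four (hk : 2 ≤ k) (hk4 : k ≠ 4) (h2 : (2 : ZMod k) ≠ 0) :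
    (1 : ZMod k) + 1 ≠ -1 + -1 := by
  intro h
  have : NeZero k := ⟨by omega⟩
  have h4 : ((4 : ℕ) : ZMod k) = 0 := by push_cast; linear_combination h
  have hdvd : k ∣ 4 := (ZMod.natCast_eq_zero_iff 4 k).mp h4
  have hle : k ≤ 4 := Nat.le_of_dvd (by norm_num) hdvd
  interval_cases k
  · exact h2 (by decide)
  · omega
  · exact hk4 rfl

end aux

theorem stmt7 (k n : ℕ) (hk : 2 ≤ k) (hk4 : k ≠ 4) (hn : 1 ≤ n) :
    hasUS {v : Fin n → ZMod k | ∃ i : Fin n,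
      v = Pi.single i 1 ∨ v = -Pi.single i 1} := by
  -- normalize membership: every element is Pi.single i a with a = ±1
  have mem_iff : ∀ v ∈ {v : Fin n → ZMod k | ∃ i : Fin n,
      v = Pi.single i 1 ∨ v = -Pi.single i 1},
      ∃ (i : Fin n) (a : ZMod k), (a = 1 ∨ a = -1) ∧ v = Pi.single i a := by
    rintro v ⟨i, h | h⟩
    · exact ⟨i, 1, Or.inl rfl, h⟩
    · refine ⟨i, -1, Or.inr rfl, ?_⟩
      rw [h]; ext t
      simp only [Pi.neg_apply, aux_single_apply]
      split <;> simp
  intro g hg s₁ h₁ s₂ h₂ s₃ h₃ s₄ h₄ hA hB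
  obtain ⟨i, a, ha, rfl⟩ := mem_iff _ h₁
  obtain ⟨j, b, hb, rfl⟩ := mem_iff _ h₂
  obtain ⟨p, c, hc, rfl⟩ := mem_iff _ h₃
  obtain ⟨q, d, hd, rfl⟩ := mem_iff _ h₄
  subst hA
  have ha0 := aux_sign_ne_zero hk ha
  have hb0 := aux_sign_ne_zero hk hb
  have hc0 := aux_sign_ne_zero hk hc
  have hd0 := aux_sign_ne_zero hk hd
  -- coordinatewise equations
  have E : ∀ t : Fin n,
      (if t = i then a else 0) + (if t = j then b else 0)
        = (if t = p then c else 0) + (if t = q then d else 0) := by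
    intro t
    have := (congrFun hB t).symm
    simpa only [Pi.add_apply, aux_single_apply] using this
  -- enough to show equality of pairs up to swap
  have key : ((Pi.single i a : Fin n → ZMod k) = (Pi.single p c : Fin n → ZMod k)
        ∧ (Pi.single j b : Fin n → ZMod k) = (Pi.single q d : Fin n → ZMod k))
      ∨ ((Pi.single i a : Fin n → ZMod k) = (Pi.single q d : Fin n → ZMod k)
        ∧ (Pi.single j b : Fin n → ZMod k) = (Pi.single p c : Fin n → ZMod k)) := by
    by_cases hij : i = j
    · subst hij
      have hab : a + b ≠ 0 := by
        intro h
        apply hg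
        ext t
        simp only [Pi.add_apply, aux_single_apply, Pi.zero_apply]
        split_ifs with ht
        · exact h
        · simp
      by_cases hpq : p = q
      · subst hpq
        by_cases hip : i = p
        · subst hip
          have Ei := E i
          simp only [eq_self_iff_true, if_true] at Ei
          rcases ha with rfl | rfl <;> rcases hb with rfl | rfl <;>
            rcases hc with rfl | rfl <;> rcases hd with rfl | rfl <;>
            first
              | (left; exact ⟨rfl, rfl⟩)
              | (right; exact ⟨rfl, rfl⟩)
              | (exact absurd (by ring : (1:ZMod k) + -1 = 0) hab)
              | (exact absurd (by ring : (-1:ZMod k) + 1 = 0) hab)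
              | (exact (hab (by linear_combination Ei)).elim)
              | (exact (aux_four hk hk4 (fun h2 => hab (by linear_combination h2)) Ei).elim)
              | (exact (aux_four hk hk4 (fun h2 => hab (by linear_combination -h2)) Ei.symm).elim)
        · have Ei := E i
          simp [hip] at Ei
          exact absurd Ei hab
      · by_cases hpi : p = i
        · by_cases hqi : q = i
          · exact absurd (hpi.trans hqi.symm) hpq
          · have Eq' := E q
            have hqp : ¬ q = p := fun h => hpq h.symm
            simp [hqi, hqp] at Eq'
            exact absurd Eq'.symm hd0
        · have Ep := E p
          simp [hpi, hpq] at Ep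
          exact absurd Ep.symm hc0
    · -- i ≠ j
      have hji : ¬ j = i := fun h => hij h.symm
      by_cases hpq : p = q
      · subst hpq
        by_cases hip : i = p
        · subst hip
          by_cases hjp : j = i
          · exact absurd hjp hji
          · have Ej := E j
            simp [hji, hjp] at Ej
            exact absurd Ej hb0
        · have Ei := E i
          simp [hij, hip] at Ei
          exact absurd Ei ha0
      · by_cases hip : i = p
        · subst hip
          have hiq : ¬ i = q := fun h => hpq h
          by_cases hjq : j = q
          · subst hjq
            have Ei := E i
            have Ej := E j
            simp [hji, hiq] at Ei
            simp [hji, hji] at Ej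
            left
            rw [Ei, Ej]
            exact ⟨rfl, rfl⟩
          · have Ej := E j
            simp [hji, hjq] at Ej
            exact absurd Ej hb0
        · by_cases hiq : i = q
          · subst hiq
            have hpi : ¬ p = i := fun h => hip h.symm
            by_cases hjp : j = p
            · subst hjp
              have Ei := E i
              have Ej := E j
              simp [hij, hpi] at Ei
              simp [hji, hij] at Ej
              right
              rw [Ei, Ej]
              exact ⟨rfl, rfl⟩
            · by_cases hji' : j = i
              · exact absurd hji' hji
              · have Ej := E j
                simp [hji, hjp, hji'] at Ej
                exact absurd Ej hb0
          · have Ei := E i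
            simp [hij, hip, hiq] at Ei
            exact absurd Ei ha0
  rcases key with ⟨h1, h2⟩ | ⟨h1, h2⟩
  · rw [h1, h2]
  · rw [h1, h2]
    exact Multiset.cons_swap _ _ _
end

section
/- Let H be a finite abelian group and S a generating inverse-closed subset of H with 0 ∉ S having the unique summation property. Let Γ = Cay(H; S) and let f be a graph automorphism of Γ fixing the vertex 0. If v, w ∈ S with v ≠ w and v + w ≠ 0, then f(v + w) = f(v) + f(w). -/
/-- The Cayley graph of an additive group `H` with connection set `S`:
vertices are elements of `H`, with `g` adjacent to `h` iff their difference lies in `S`. -/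
def cayA (H : Type*) [AddGroup H] (S : Set H) : SimpleGraph H :=
  SimpleGraph.fromRel (fun g h => h - g ∈ S)

/-- The automorphism group of a graph, as a subgroup of the permutations of the vertices. -/
def graphAut {V : Type*} (Γ : SimpleGraph V) : Subgroup (Equiv.Perm V) where
  carrier := {f | ∀ a b, Γ.Adj (f a) (f b) ↔ Γ.Adj a b}
  one_mem' := by intro a b; simp
  mul_mem' := by
    intro f g hf hg a b
    simp only [Equiv.Perm.mul_apply]
    exact (hf _ _).trans (hg a b)
  inv_mem' := by
    intro f hf a b
    conv_rhs => rw [← Equiv.apply_symm_apply f a, ← Equiv.apply_symm_apply f b]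
    exact (hf _ _).symm

theorem stmt8 {H : Type*} [AddCommGroup H] [Finite H] (S : Set H)
    (hgen : AddSubgroup.closure S = ⊤) (hinv : ∀ s ∈ S, -s ∈ S) (h0 : (0 : H) ∉ S)
    (hus : hasUS S)
    (f : Equiv.Perm H) (hf : f ∈ graphAut (cayA H S)) (hf0 : f 0 = 0)
    (v w : H) (hv : v ∈ S) (hw : w ∈ S) (hvw : v ≠ w) (hvw0 : v + w ≠ 0) :
    f (v + w) = f v + f w := by
  have hadj : ∀ a b : H, (cayA H S).Adj a b ↔ a ≠ b ∧ b - a ∈ S := by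
    intro a b
    constructor
    · rintro ⟨hne, h | h⟩
      · exact ⟨hne, h⟩
      · exact ⟨hne, by simpa using hinv _ h⟩
    · rintro ⟨hne, h⟩; exact ⟨hne, Or.inl h⟩
  have hne0 : ∀ s ∈ S, s ≠ 0 := fun s hs h => h0 (h ▸ hs)
  have hfS : ∀ s ∈ S, f s ∈ S := by
    intro s hs
    have : (cayA H S).Adj (f 0) (f s) :=
      (hf 0 s).2 ((hadj 0 s).2 ⟨(hne0 s hs).symm, by simpa using hs⟩)
    rw [hf0] at this
    simpa using ((hadj 0 (f s)).1 this).2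
  have hadjv : (cayA H S).Adj v (v + w) :=
    (hadj _ _).2 ⟨fun h => hne0 w hw (by simpa using h.symm), by simpa using hw⟩
  have hadjw : (cayA H S).Adj w (v + w) :=
    (hadj _ _).2 ⟨fun h => hne0 v hv (by simpa [add_comm] using h.symm), by simpa [add_comm] using hv⟩
  have h1 := (hadj _ _).1 ((hf v (v + w)).2 hadjv)
  have h2 := (hadj _ _).1 ((hf w (v + w)).2 hadjw)
  set g := f (v + w) with hg
  have hgne : g ≠ 0 := fun h => hvw0 (f.injective (by rw [← hg, h, hf0]))
  have key := hus g hgne (f v) (hfS v hv) (g - f v) h1.2 (f w) (hfS w hw) (g - f w) h2.2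
    (by abel) (by abel)
  have hfvw : f v ≠ f w := fun h => hvw (f.injective h)
  have hmem : f v ∈ ({f w, g - f w} : Multiset H) := by
    rw [← key]; simp
  have : f v = g - f w := by
    rcases (by simpa [Multiset.insert_eq_cons] using hmem : v = w ∨ f v = g - f w) with h | h
    · exact absurd h hvw
    · exact h
  rw [eq_sub_iff_add_eq] at this
  rw [← this, add_comm]
end

section
/- Let k ≥ 4 and let f be a group automorphism of ℤ_{2k+1} with f(S) = S where S = {1, 2k, k, k+1}. Then f(1) = 1 or f(1) = -1; in particular, the group of such automorphisms has order exactly 2. -/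
private lemma zmod_aut_apply {n : ℕ} [NeZero n] (f : AddAut (ZMod n)) (x : ZMod n) :
    f x = x * f 1 := by
  conv_lhs => rw [show x = x.val • (1 : ZMod n) by
    simp [nsmul_eq_mul, ZMod.natCast_val, ZMod.cast_id]]
  rw [map_nsmul, nsmul_eq_mul, ZMod.natCast_val, ZMod.cast_id]

private lemma key18 (k : ℕ) (hk : 4 ≤ k)
    (h : ((k : ZMod (2*k+1)))^2 = 1 ∨ ((k : ZMod (2*k+1)))^2 = -1 ∨
         ((k : ZMod (2*k+1)))^2 = (k : ZMod (2*k+1)) ∨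
         ((k : ZMod (2*k+1)))^2 = -(k : ZMod (2*k+1))) : False := by
  have h0 : ((2*k+1 : ℕ) : ZMod (2*k+1)) = 0 := ZMod.natCast_self _
  push_cast at h0
  have hdvd : ∀ m : ℕ, ((m : ℕ) : ZMod (2*k+1)) = 0 → (2*k+1) ∣ m := fun m hm =>
    (ZMod.natCast_eq_zero_iff m (2*k+1)).mp hm
  rcases h with h | h | h | h
  · have h3 : ((3:ℕ) : ZMod (2*k+1)) = 0 := by
      push_cast
      linear_combination (2*(k:ZMod (2*k+1))-1)*h0 - 4*h
    have := Nat.le_of_dvd (by norm_num) (hdvd 3 h3)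
    omega
  · have h5 : ((5:ℕ) : ZMod (2*k+1)) = 0 := by
      push_cast
      linear_combination (1-2*(k:ZMod (2*k+1)))*h0 + 4*h
    have := Nat.le_of_dvd (by norm_num) (hdvd 5 h5)
    omega
  · have h3 : ((3:ℕ) : ZMod (2*k+1)) = 0 := by
      push_cast
      linear_combination 4*h + (3-2*(k:ZMod (2*k+1)))*h0
    have := Nat.le_of_dvd (by norm_num) (hdvd 3 h3)
    omega
  · have h1 : ((1:ℕ) : ZMod (2*k+1)) = 0 := by
      push_cast
      linear_combination (-4)*h + (2*(k:ZMod (2*k+1))+1)*h0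
    have := Nat.le_of_dvd (by norm_num) (hdvd 1 h1)
    omega

theorem stmt18 (k : ℕ) (hk : 4 ≤ k)
    (S : Set (ZMod (2 * k + 1)))
    (hS : S = {1, ((2 * k : ℕ) : ZMod (2 * k + 1)), ((k : ℕ) : ZMod (2 * k + 1)),
      ((k + 1 : ℕ) : ZMod (2 * k + 1))}) :
    (∀ f : AddAut (ZMod (2 * k + 1)), ⇑f '' S = S → f 1 = 1 ∨ f 1 = -1) ∧
    Nat.card {f : AddAut (ZMod (2 * k + 1)) // ⇑f '' S = S} = 2 := by
  have h0 : ((2*k+1 : ℕ) : ZMod (2*k+1)) = 0 := ZMod.natCast_self _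
  push_cast at h0
  have h2k : ((2*k : ℕ) : ZMod (2*k+1)) = -1 := by push_cast; linear_combination h0
  have hk1 : ((k+1 : ℕ) : ZMod (2*k+1)) = -(k : ZMod (2*k+1)) := by
    push_cast; linear_combination h0
  have H : ∀ f : AddAut (ZMod (2 * k + 1)), ⇑f '' S = S → f 1 = 1 ∨ f 1 = -1 := by
    intro f hf
    have h1S : f 1 ∈ S := by
      rw [← hf]
      exact Set.mem_image_of_mem f (by rw [hS]; left; rfl)
    have hkS : f (k : ZMod (2*k+1)) ∈ S := by
      rw [← hf]
      exact Set.mem_image_of_mem f (by rw [hS]; right; right; left; rfl)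
    rw [hS, Set.mem_insert_iff, Set.mem_insert_iff, Set.mem_insert_iff,
      Set.mem_singleton_iff, h2k, hk1] at h1S
    rw [hS, Set.mem_insert_iff, Set.mem_insert_iff, Set.mem_insert_iff,
      Set.mem_singleton_iff, h2k, hk1, zmod_aut_apply] at hkS
    rcases h1S with h1 | h1 | h1 | h1
    · exact Or.inl h1
    · exact Or.inr h1
    · exfalso
      rw [h1, ← sq] at hkS
      apply key18 k hk
      tauto
    · exfalso
      rw [h1] at hkS
      apply key18 k hk
      rcases hkS with h | h | h | h
      · right; left; linear_combination -h
      · left; linear_combination -h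
      · right; right; right; linear_combination -h
      · right; right; left; linear_combination -h
  refine ⟨H, ?_⟩
  have hneg : ⇑(AddEquiv.neg (ZMod (2*k+1)) : AddAut (ZMod (2*k+1))) '' S = S := by
    rw [hS]
    have : ⇑(AddEquiv.neg (ZMod (2*k+1)) : AddAut (ZMod (2*k+1))) = fun x => -x := by
      funext x; rfl
    rw [this, Set.image_insert_eq, Set.image_insert_eq, Set.image_insert_eq,
      Set.image_singleton, h2k, hk1]
    ext x
    simp only [Set.mem_insert_iff, Set.mem_singleton_iff, neg_neg]
    constructor <;> rintro (h|h|h|h) <;> simp_all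
  have hone : ⇑(0 : AddAut (ZMod (2*k+1))) '' S = S := by
    simp [Set.image_id']
  have hne : (0 : AddAut (ZMod (2*k+1))) ≠ (AddEquiv.neg (ZMod (2*k+1)) : AddAut (ZMod (2*k+1))) := by
    intro h
    have h1 : (1 : ZMod (2*k+1)) = -1 := by
      calc (1 : ZMod (2*k+1)) = (0 : AddAut (ZMod (2*k+1))) 1 := rfl
        _ = (AddEquiv.neg (ZMod (2*k+1)) : AddAut (ZMod (2*k+1))) 1 := by rw [h]
        _ = -1 := rfl
    have h2 : ((2:ℕ) : ZMod (2*k+1)) = 0 := by push_cast; linear_combination h1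
    have := Nat.le_of_dvd (by norm_num) ((ZMod.natCast_eq_zero_iff 2 (2*k+1)).mp h2)
    omega
  have hset : {f : AddAut (ZMod (2*k+1)) | ⇑f '' S = S}
      = {0, (AddEquiv.neg (ZMod (2*k+1)) : AddAut (ZMod (2*k+1)))} := by
    ext g
    simp only [Set.mem_setOf_eq, Set.mem_insert_iff, Set.mem_singleton_iff]
    constructor
    · intro hg
      rcases H g hg with h | h
      · left
        ext x
        rw [zmod_aut_apply, h, mul_one]; rfl
      · right
        ext x
        rw [zmod_aut_apply, h, mul_neg_one]
        rfl
    · rintro (rfl | rfl)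
      · exact hone
      · exact hneg
  have : Nat.card {f : AddAut (ZMod (2 * k + 1)) // ⇑f '' S = S}
      = ({0, (AddEquiv.neg (ZMod (2*k+1)) : AddAut (ZMod (2*k+1)))} :
        Set (AddAut (ZMod (2*k+1)))).ncard := by
    rw [← Nat.card_coe_set_eq, ← hset]
    rfl
  rw [this, Set.ncard_pair hne]
end
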